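/- Let Θ be a completely positive map from matrices over 𝒳 to matrices over 𝒴 with positive definite Choi matrix marginal, and let R := Θ†(I_𝒴) be positive definite and S be positive definite on 𝒳. Let Ξ := Θ ∘ K_{(R^{-1} # S)²}, i.e., Ξ(X) = Θ(G X G) with G := R^{-1} # S. Then Ξ†(I_𝒴) = S, and the Choi matrix 𝔠(Ξ) is the unique Bures projection of 𝔠(Θ) onto the set {M PSD on 𝒳⊗𝒴 : Tr_𝒴[M] = Sᵀ}, i.e., 𝔠(Ξ) maximizes M ↦ F(𝔠(Θ), M) over this set. -/

import Mathlib

open Matrix Kronecker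
open scoped ComplexOrder

noncomputable section

open Classical in
/-- The positive semidefinite square root of a PSD matrix (junk value `0` otherwise). -/
noncomputable def msqrt {n : Type*} [Fintype n] [DecidableEq n] (A : Matrix n n ℂ) :
    Matrix n n ℂ :=
  if h : A.PosSemidef then
    h.1.eigenvectorUnitary.1 * diagonal ((↑) ∘ (√·) ∘ h.1.eigenvalues) *
      (star h.1.eigenvectorUnitary : Matrix n n ℂ)
  else 0

/-- The (square-root) fidelity `F(P,Q) = Tr[√(√Q P √Q)]`. -/
noncomputable def fidelity {n : Type*} [Fintype n] [DecidableEq n]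
    (P Q : Matrix n n ℂ) : ℝ :=
  ((msqrt (msqrt Q * P * msqrt Q)).trace).re

/-- The matrix geometric mean `A # B = A^{1/2} √(A^{-1/2} B A^{-1/2}) A^{1/2}`. -/
noncomputable def geomMean {n : Type*} [Fintype n] [DecidableEq n]
    (A B : Matrix n n ℂ) : Matrix n n ℂ :=
  msqrt A * msqrt ((msqrt A)⁻¹ * B * (msqrt A)⁻¹) * msqrt A

/-- The Choi matrix of a map `Φ` from matrices over `𝒳` to matrices over `𝒴`:
`𝔠(Φ) = ∑ i j, |i⟩⟨j| ⊗ Φ(|i⟩⟨j|)`. -/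
noncomputable def choi {X Y : Type*} [DecidableEq X]
    (Φ : Matrix X X ℂ → Matrix Y Y ℂ) : Matrix (X × Y) (X × Y) ℂ :=
  Matrix.of fun p q => Φ (Matrix.single p.1 q.1 1) p.2 q.2

/-- Partial trace over the output (second) factor `𝒴`. -/
noncomputable def ptraceY {X Y : Type*} [Fintype Y]
    (M : Matrix (X × Y) (X × Y) ℂ) : Matrix X X ℂ :=
  Matrix.of fun x x' => ∑ y : Y, M (x, y) (x', y)

/-!
Put `W = Gᵀ ⊗ 1`. Then `𝔠(Ξ) = W 𝔠(Θ) W`, and the Riccati equation `G R G = S` makes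
`Tr[𝔠(Θ) W]` and `Tr[N W⁻¹]`, for every `N` with `Tr_𝒴 N = Sᵀ`, both equal to `Tr[G R]`. The
variational bound `2 F(P, N) ≤ Tr[P W] + Tr[N W⁻¹]`, with equality only at `N = W P W`, therefore
shows that `𝔠(Ξ)`, where `F = Tr[G R]` is attained, is the unique maximiser.

The bound is the arithmetic–geometric mean inequality `2 F(P, N) ≤ Tr P + Tr N` transported by
the fidelity-preserving congruence `P ↦ √W P √W`, `N ↦ √W⁻¹ N √W⁻¹`. For that inequality, a polar
decomposition `√P √N = U |√P √N|` with a partial isometry `U` exhibits `Tr P + Tr N - 2 F(P, N)`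
as the sum of the squared Frobenius norms of `√P U - √N` and `√P (1 - U Uᴴ)`.
-/

section TraceForm

variable {m n : Type*} [Fintype m] [Fintype n]

theorem re_trace_conjTranspose_mul_self_nonneg (A : Matrix m n ℂ) : 0 ≤ (Aᴴ * A).trace.re :=
  (Complex.nonneg_iff.1 (posSemidef_conjTranspose_mul_self A).trace_nonneg).1

theorem re_trace_conjTranspose_mul_self_eq_zero_iff {A : Matrix m n ℂ} :
    (Aᴴ * A).trace.re = 0 ↔ A = 0 := by
  refine ⟨fun h => trace_conjTranspose_mul_self_eq_zero_iff.1 (Complex.ext h ?_),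
    fun h => by simp [h]⟩
  exact (Complex.nonneg_iff.1 (posSemidef_conjTranspose_mul_self A).trace_nonneg).2.symm

theorem re_trace_conjTranspose_sub_mul_sub (A B : Matrix m n ℂ) :
    ((A - B)ᴴ * (A - B)).trace.re
      = (Aᴴ * A).trace.re + (Bᴴ * B).trace.re - 2 * (Aᴴ * B).trace.re := by
  have hBA : (Bᴴ * A).trace.re = (Aᴴ * B).trace.re := by
    rw [← conjTranspose_conjTranspose A, ← conjTranspose_mul, trace_conjTranspose,
      conjTranspose_conjTranspose]
    rfl
  simp only [conjTranspose_sub, Matrix.sub_mul, Matrix.mul_sub, trace_sub, Complex.sub_re, hBA]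
  ring

end TraceForm

section Fidelity

open scoped MatrixOrder

variable {n : Type*} [Fintype n] [DecidableEq n]

theorem msqrt_eq_cfcSqrt {A : Matrix n n ℂ} (hA : A.PosSemidef) : msqrt A = CFC.sqrt A := by
  rw [msqrt, dif_pos hA, CFC.sqrt_eq_cfc, cfc_nnreal_eq_real _ A, hA.1.cfc_eq]
  simp [IsHermitian.cfc, Unitary.conjStarAlgAut_apply, Function.comp_def,
    max_eq_left (hA.eigenvalues_nonneg _)]

theorem posSemidef_msqrt {A : Matrix n n ℂ} (hA : A.PosSemidef) : (msqrt A).PosSemidef := by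
  rw [msqrt_eq_cfcSqrt hA]
  exact (CFC.sqrt_nonneg A).posSemidef

theorem msqrt_mul_msqrt {A : Matrix n n ℂ} (hA : A.PosSemidef) : msqrt A * msqrt A = A := by
  rw [msqrt_eq_cfcSqrt hA]
  exact CFC.sqrt_mul_sqrt_self A hA.nonneg

theorem msqrt_eq_of_mul_self_eq {A B : Matrix n n ℂ} (hB : B.PosSemidef) (h : B * B = A) :
    msqrt A = B := by
  have hA : A.PosSemidef := by simpa [← h, hB.1.eq] using posSemidef_conjTranspose_mul_self B
  rw [msqrt_eq_cfcSqrt hA]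
  exact CFC.sqrt_unique h hB.nonneg

theorem posDef_msqrt {A : Matrix n n ℂ} (hA : A.PosDef) : (msqrt A).PosDef := by
  refine (posSemidef_msqrt hA.posSemidef).posDef_iff_isUnit.2
    (isUnit_of_mul_isUnit_left (y := msqrt A) ?_)
  simpa [msqrt_mul_msqrt hA.posSemidef] using hA.isUnit

theorem posDef_geomMean {A B : Matrix n n ℂ} (hA : A.PosDef) (hB : B.PosDef) :
    (geomMean A B).PosDef := by
  have ha := posDef_msqrt hA
  have hconj {a x : Matrix n n ℂ} (h : a.PosDef) (hx : x.PosDef) : (a * x * a).PosDef := by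
    have := (Matrix.IsUnit.posDef_star_left_conjugate_iff (x := x) h.isUnit).2 hx
    rwa [star_eq_conjTranspose, h.isHermitian.eq] at this
  exact hconj ha (posDef_msqrt (hconj ha.inv hB))

theorem geomMean_mul_inv_mul_geomMean {A B : Matrix n n ℂ} (hA : A.PosDef) (hB : B.PosSemidef) :
    geomMean A B * A⁻¹ * geomMean A B = B := by
  have ha := posDef_msqrt hA
  have hdet : IsUnit (msqrt A).det := (isUnit_iff_isUnit_det _).1 ha.isUnit
  have hmid : ((msqrt A)⁻¹ * B * (msqrt A)⁻¹).PosSemidef := by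
    have := hB.conjTranspose_mul_mul_same (msqrt A)⁻¹
    rwa [ha.inv.isHermitian.eq] at this
  have hm := msqrt_mul_msqrt hmid
  have hAinv : A⁻¹ = (msqrt A)⁻¹ * (msqrt A)⁻¹ := by
    conv_lhs => rw [← msqrt_mul_msqrt hA.posSemidef]
    exact Matrix.mul_inv_rev _ _
  rw [geomMean, hAinv]
  generalize msqrt A = a at hdet hm
  generalize msqrt (a⁻¹ * B * a⁻¹) = m at hm
  calc a * m * a * (a⁻¹ * a⁻¹) * (a * m * a) = a * (m * m) * a := by
        simp only [Matrix.mul_assoc, Matrix.mul_nonsing_inv_cancel_left _ _ hdet,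
          Matrix.nonsing_inv_mul_cancel_left _ _ hdet]
    _ = B := by
        rw [hm]
        simp only [Matrix.mul_assoc, Matrix.mul_nonsing_inv_cancel_left _ _ hdet,
          Matrix.nonsing_inv_mul _ hdet, Matrix.mul_one]

/-- The Moore–Penrose pseudo-inverse `cfc (·⁻¹) T`; it works because `(0 : ℝ)⁻¹ = 0`. -/
theorem exists_pseudoInverse {T : Matrix n n ℂ} (hT : IsSelfAdjoint T) :
    ∃ T' : Matrix n n ℂ, T'ᴴ = T' ∧ T * T' = T' * T ∧ T * T' * T = T ∧ T' * T * T' = T' := by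
  have hid : cfc (fun x : ℝ => x) T = T := cfc_id' ℝ T
  have hmul (f g : ℝ → ℝ) : cfc f T * cfc g T = cfc (fun x => f x * g x) T :=
    (cfc_mul f g T (T.finite_real_spectrum.continuousOn f)
      (T.finite_real_spectrum.continuousOn g)).symm
  refine ⟨cfc (·⁻¹ : ℝ → ℝ) T, IsSelfAdjoint.cfc, ?_, ?_, ?_⟩
  · simpa only [hid] using (cfc_commute_cfc (fun x : ℝ => x) (·⁻¹ : ℝ → ℝ) T).eq
  · calc T * cfc (·⁻¹ : ℝ → ℝ) T * T
        = cfc (fun x : ℝ => x) T * cfc (·⁻¹ : ℝ → ℝ) T * cfc (fun x : ℝ => x) T := by rw [hid]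
      _ = T := by rw [hmul, hmul]; simp only [mul_inv_mul_cancel, hid]
  · calc cfc (·⁻¹ : ℝ → ℝ) T * T * cfc (·⁻¹ : ℝ → ℝ) T
        = cfc (·⁻¹ : ℝ → ℝ) T * cfc (fun x : ℝ => x) T * cfc (·⁻¹ : ℝ → ℝ) T := by rw [hid]
      _ = cfc (·⁻¹ : ℝ → ℝ) T := by
        rw [hmul, hmul]
        exact cfc_congr fun x _ => by simpa using mul_inv_mul_cancel x⁻¹

/-- Polar decomposition with a partial isometry: `U = M |M|⁺`. -/
theorem exists_partialIsometry_polar (M : Matrix n n ℂ) :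
    ∃ U : Matrix n n ℂ,
      U * Uᴴ * U = U ∧ U * msqrt (Mᴴ * M) = M ∧ Uᴴ * M = msqrt (Mᴴ * M) := by
  have hMM := posSemidef_conjTranspose_mul_self M
  have hTT : msqrt (Mᴴ * M) * msqrt (Mᴴ * M) = Mᴴ * M := msqrt_mul_msqrt hMM
  obtain ⟨T', hT'H, hcomm, hTT'T, hT'TT'⟩ := exists_pseudoInverse (posSemidef_msqrt hMM).1
  generalize msqrt (Mᴴ * M) = T at hTT hcomm hTT'T hT'TT' ⊢
  have hUM : (M * T')ᴴ * M = T := by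
    rw [conjTranspose_mul, hT'H, Matrix.mul_assoc, ← hTT, ← Matrix.mul_assoc, ← hcomm, hTT'T]
  have hker : M * (1 - T' * T) = 0 := by
    rw [← conjTranspose_mul_self_eq_zero, conjTranspose_mul, Matrix.mul_assoc,
      ← Matrix.mul_assoc Mᴴ, ← hTT, Matrix.mul_assoc T, Matrix.mul_sub, Matrix.mul_one,
      ← Matrix.mul_assoc T T', hTT'T, sub_self, Matrix.mul_zero, Matrix.mul_zero]
  refine ⟨M * T', ?_, ?_, hUM⟩
  · rw [Matrix.mul_assoc, ← Matrix.mul_assoc _ M, hUM, Matrix.mul_assoc M, ← Matrix.mul_assoc T',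
      hT'TT']
  · rwa [Matrix.mul_sub, Matrix.mul_one, sub_eq_zero, eq_comm, ← Matrix.mul_assoc] at hker

theorem trace_msqrt_mul_conjTranspose (M : Matrix n n ℂ) :
    (msqrt (M * Mᴴ)).trace = (msqrt (Mᴴ * M)).trace := by
  obtain ⟨U, -, hUT, hUM⟩ := exists_partialIsometry_polar M
  have hT := posSemidef_msqrt (posSemidef_conjTranspose_mul_self M)
  generalize msqrt (Mᴴ * M) = T at hT hUT hUM
  have hUUT : Uᴴ * U * T = T := by rw [Matrix.mul_assoc, hUT, hUM]
  have hsq : U * T * Uᴴ * (U * T * Uᴴ) = M * Mᴴ := by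
    calc U * T * Uᴴ * (U * T * Uᴴ) = U * T * (Uᴴ * U * T) * Uᴴ := by
          simp only [Matrix.mul_assoc]
      _ = M * Mᴴ := by
          rw [hUUT, ← hUT, conjTranspose_mul, hT.1.eq, Matrix.mul_assoc]
  rw [msqrt_eq_of_mul_self_eq (hT.mul_mul_conjTranspose_same U) hsq, trace_mul_comm,
    ← Matrix.mul_assoc, hUUT]

theorem fidelity_eq_of_mul_conjTranspose_eq {P N B : Matrix n n ℂ} (hP : P.PosSemidef)
    (hB : B * Bᴴ = N) : fidelity P N = (msqrt (Bᴴ * P * B)).trace.re := by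
  have hp := posSemidef_msqrt hP
  have hindep {C : Matrix n n ℂ} (hC : C * Cᴴ = N) :
      (msqrt (Cᴴ * P * C)).trace = (msqrt (msqrt P * N * msqrt P)).trace := by
    have h1 : (msqrt P * C)ᴴ * (msqrt P * C) = Cᴴ * P * C := by
      rw [conjTranspose_mul, hp.1.eq, Matrix.mul_assoc, ← Matrix.mul_assoc (msqrt P),
        msqrt_mul_msqrt hP, Matrix.mul_assoc]
    have h2 : msqrt P * N * msqrt P = (msqrt P * C) * (msqrt P * C)ᴴ := by
      rw [conjTranspose_mul, hp.1.eq, ← hC]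
      simp only [Matrix.mul_assoc]
    rw [← h1, h2, trace_msqrt_mul_conjTranspose]
  have hN : N.PosSemidef := hB ▸ posSemidef_self_mul_conjTranspose B
  have hq := posSemidef_msqrt hN
  have hsqrt := hindep (C := msqrt N) (by rw [hq.1.eq, msqrt_mul_msqrt hN])
  rw [hq.1.eq] at hsqrt
  rw [fidelity, hsqrt, hindep hB]

theorem fidelity_conj {P N K : Matrix n n ℂ} (hP : P.PosSemidef) (hN : N.PosSemidef)
    (hK : IsUnit K) : fidelity (Kᴴ * P * K) (K⁻¹ * N * K⁻¹ᴴ) = fidelity P N := by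
  have hq := posSemidef_msqrt hN
  have hdet : IsUnit K.det := (isUnit_iff_isUnit_det K).1 hK
  have hdet' : IsUnit Kᴴ.det := by rw [det_conjTranspose]; exact hdet.star
  have hB : K⁻¹ * msqrt N * (K⁻¹ * msqrt N)ᴴ = K⁻¹ * N * K⁻¹ᴴ := by
    rw [conjTranspose_mul, hq.1.eq, Matrix.mul_assoc, ← Matrix.mul_assoc (msqrt N),
      msqrt_mul_msqrt hN, Matrix.mul_assoc]
  have hconj : (K⁻¹ * msqrt N)ᴴ * (Kᴴ * P * K) * (K⁻¹ * msqrt N) = msqrt N * P * msqrt N := by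
    rw [conjTranspose_mul, hq.1.eq, conjTranspose_nonsing_inv]
    simp only [Matrix.mul_assoc, Matrix.mul_nonsing_inv_cancel_left _ _ hdet,
      Matrix.nonsing_inv_mul_cancel_left _ _ hdet']
  rw [fidelity_eq_of_mul_conjTranspose_eq (hP.conjTranspose_mul_mul_same K) hB, hconj, fidelity]

theorem fidelity_mul_mul_self {P W : Matrix n n ℂ} (hP : P.PosSemidef) (hW : W.PosSemidef) :
    fidelity P (W * P * W) = (P * W).trace.re := by
  have hp := posSemidef_msqrt hP
  have hpp := msqrt_mul_msqrt hP
  have hB : W * msqrt P * (W * msqrt P)ᴴ = W * P * W := by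
    rw [conjTranspose_mul, hp.1.eq, hW.1.eq, Matrix.mul_assoc, ← Matrix.mul_assoc (msqrt P), hpp,
      Matrix.mul_assoc]
  rw [fidelity_eq_of_mul_conjTranspose_eq hP hB]
  generalize msqrt P = p at hp hpp ⊢
  subst hpp
  have hsq : (W * p)ᴴ * (p * p) * (W * p) = p * W * p * (p * W * p) := by
    rw [conjTranspose_mul, hp.1.eq, hW.1.eq]
    simp only [Matrix.mul_assoc]
  have hpWp : (p * W * p).PosSemidef := by
    simpa only [hp.1.eq] using hW.conjTranspose_mul_mul_same p
  rw [hsq, msqrt_eq_of_mul_self_eq hpWp rfl, trace_mul_comm, ← Matrix.mul_assoc]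

theorem re_trace_add_sub_two_mul_eq_of_partialIsometry {p q U : Matrix n n ℂ} (hp : pᴴ = p)
    (hq : qᴴ = q) (hU : U * Uᴴ * U = U) :
    (p * p).trace.re + (q * q).trace.re - 2 * (Uᴴ * (p * q)).trace.re
      = ((p * U - q)ᴴ * (p * U - q)).trace.re
        + ((p * (1 - U * Uᴴ))ᴴ * (p * (1 - U * Uᴴ))).trace.re := by
  set Pr := U * Uᴴ
  have hPrH : Prᴴ = Pr := by rw [conjTranspose_mul, conjTranspose_conjTranspose]
  have hPr : Pr * Pr = Pr := by rw [← Matrix.mul_assoc, hU]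
  have hPU : ((p * U)ᴴ * (p * U)).trace = (p * p * Pr).trace := by
    rw [trace_mul_comm, conjTranspose_mul, hp, ← trace_mul_cycle p Pr p]
    simp only [Pr, Matrix.mul_assoc]
  have hPcompl : ((p * (1 - Pr))ᴴ * (p * (1 - Pr))).trace = (p * p * (1 - Pr)).trace := by
    have hidem : (1 - Pr) * (1 - Pr) = 1 - Pr := by
      simp [sub_mul, mul_sub, hPr]
    rw [trace_mul_comm, conjTranspose_mul, conjTranspose_sub, conjTranspose_one, hPrH, hp,
      ← Matrix.mul_assoc, Matrix.mul_assoc p, hidem, trace_mul_cycle]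
  have hPUq : ((p * U)ᴴ * q).trace = (Uᴴ * (p * q)).trace := by
    rw [conjTranspose_mul, hp, Matrix.mul_assoc]
  rw [re_trace_conjTranspose_sub_mul_sub, hPU, hPcompl, hPUq, hq, Matrix.mul_sub, Matrix.mul_one,
    trace_sub, Complex.sub_re]
  ring

theorem two_mul_fidelity_le_re_trace_add_re_trace {P N : Matrix n n ℂ} (hP : P.PosSemidef)
    (hN : N.PosSemidef) :
    2 * fidelity P N ≤ P.trace.re + N.trace.re ∧
      (2 * fidelity P N = P.trace.re + N.trace.re → P = N) := by
  have hp := posSemidef_msqrt hP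
  have hq := posSemidef_msqrt hN
  have hpp := msqrt_mul_msqrt hP
  have hqq := msqrt_mul_msqrt hN
  obtain ⟨U, hU, -, hUM⟩ := exists_partialIsometry_polar (msqrt P * msqrt N)
  have hF : fidelity P N = (Uᴴ * (msqrt P * msqrt N)).trace.re := by
    rw [hUM, conjTranspose_mul, hp.1.eq, hq.1.eq, Matrix.mul_assoc, ← Matrix.mul_assoc (msqrt P),
      hpp, ← Matrix.mul_assoc, fidelity]
  generalize msqrt P = p at hp hpp hF
  generalize msqrt N = q at hq hqq hF
  subst hpp hqq
  have hgap := re_trace_add_sub_two_mul_eq_of_partialIsometry hp.1.eq hq.1.eq hU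
  rw [← hF] at hgap
  have h1 := re_trace_conjTranspose_mul_self_nonneg (p * U - q)
  have h2 := re_trace_conjTranspose_mul_self_nonneg (p * (1 - U * Uᴴ))
  refine ⟨by linarith, fun heq => ?_⟩
  have hpU : p * U = q :=
    sub_eq_zero.1 (re_trace_conjTranspose_mul_self_eq_zero_iff.1 (by linarith))
  have hpUU : p * (U * Uᴴ) = p := by
    have h0 := (re_trace_conjTranspose_mul_self_eq_zero_iff (A := p * (1 - U * Uᴴ))).1
      (by linarith)
    rwa [Matrix.mul_sub, Matrix.mul_one, sub_eq_zero, eq_comm] at h0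
  calc p * p = p * (U * Uᴴ) * p := by rw [hpUU]
    _ = q * qᴴ := by
      rw [← hpU, conjTranspose_mul, hp.1.eq]
      simp only [Matrix.mul_assoc]
    _ = q * q := by rw [hq.1.eq]

theorem two_mul_fidelity_le_re_trace_mul_add_re_trace_mul_inv {P N W : Matrix n n ℂ}
    (hP : P.PosSemidef) (hN : N.PosSemidef) (hW : W.PosDef) :
    2 * fidelity P N ≤ (P * W).trace.re + (N * W⁻¹).trace.re ∧
      (2 * fidelity P N = (P * W).trace.re + (N * W⁻¹).trace.re → N = W * P * W) := by
  have hw := posDef_msqrt hW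
  have hww := msqrt_mul_msqrt hW.posSemidef
  generalize msqrt W = w at hw hww
  subst hww
  have hdet : IsUnit w.det := (isUnit_iff_isUnit_det w).1 hw.isUnit
  have hwH : wᴴ = w := hw.isHermitian.eq
  have hwiH : w⁻¹ᴴ = w⁻¹ := hw.inv.isHermitian.eq
  have hPw : (wᴴ * P * w).trace = (P * (w * w)).trace := by
    rw [hwH, trace_mul_cycle, trace_mul_comm]
  have hNw : (w⁻¹ * N * w⁻¹ᴴ).trace = (N * (w * w)⁻¹).trace := by
    rw [hwiH, trace_mul_cycle, trace_mul_comm, Matrix.mul_inv_rev]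
  have hconj := two_mul_fidelity_le_re_trace_add_re_trace (hP.conjTranspose_mul_mul_same w)
    (hN.mul_mul_conjTranspose_same w⁻¹)
  rw [fidelity_conj hP hN hw.isUnit, hPw, hNw] at hconj
  refine ⟨hconj.1, fun heq => ?_⟩
  have h := hconj.2 heq
  rw [hwH, hwiH] at h
  calc N = w * (w⁻¹ * N * w⁻¹) * w := by
        simp only [Matrix.mul_assoc, Matrix.mul_nonsing_inv_cancel_left _ _ hdet,
          Matrix.nonsing_inv_mul _ hdet, Matrix.mul_one]
    _ = w * w * P * (w * w) := by rw [← h]; simp only [Matrix.mul_assoc]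

theorem fidelity_le_fidelity_mul_mul_self {P N W : Matrix n n ℂ} (hP : P.PosSemidef)
    (hN : N.PosSemidef) (hW : W.PosDef) (htr : (N * W⁻¹).trace.re = (P * W).trace.re) :
    fidelity P N ≤ fidelity P (W * P * W) ∧
      (fidelity P N = fidelity P (W * P * W) → N = W * P * W) := by
  obtain ⟨hle, heq⟩ := two_mul_fidelity_le_re_trace_mul_add_re_trace_mul_inv hP hN hW
  rw [fidelity_mul_mul_self hP hW.posSemidef]
  exact ⟨by linarith, fun h => heq (by linarith)⟩

end Fidelity

section Choi

variable {X Y : Type*} [Fintype X] [Fintype Y]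

theorem ptraceY_choi [DecidableEq X] {Φ : Matrix X X ℂ → Matrix Y Y ℂ} {R : Matrix X X ℂ}
    (h : ∀ A, (Φ A).trace = (R * A).trace) : ptraceY (choi Φ) = Rᵀ := by
  ext x x'
  change (Φ (single x x' 1)).trace = _
  simp [h, trace_mul_single]

theorem trace_mul_kronecker_one [DecidableEq Y] (M : Matrix (X × Y) (X × Y) ℂ) (C : Matrix X X ℂ) :
    (M * (C ⊗ₖ (1 : Matrix Y Y ℂ))).trace = (ptraceY M * C).trace := by
  simp only [trace, diag, mul_apply, kroneckerMap_apply, one_apply, Fintype.sum_prod_type,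
    mul_ite, mul_one, mul_zero, Finset.sum_ite_eq', Finset.mem_univ, if_true, ptraceY, of_apply,
    Finset.sum_mul]
  exact Finset.sum_congr rfl fun _ _ => Finset.sum_comm

theorem mul_single_one_mul [DecidableEq X] (A B : Matrix X X ℂ) (x x' : X) :
    A * single x x' 1 * B = ∑ a, ∑ b, (A a x * B x' b) • single a b 1 := by
  ext a b
  simp [mul_apply, Matrix.sum_apply, single_apply, ite_and]

theorem choi_comp_mul_mul [DecidableEq X] [DecidableEq Y] (Θ : Matrix X X ℂ →ₗ[ℂ] Matrix Y Y ℂ)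
    (A B : Matrix X X ℂ) :
    choi (fun M => Θ (A * M * B))
      = (Aᵀ ⊗ₖ (1 : Matrix Y Y ℂ)) * choi (fun M => Θ M) * (Bᵀ ⊗ₖ (1 : Matrix Y Y ℂ)) := by
  ext ⟨x, y⟩ ⟨x', y'⟩
  simp only [choi, of_apply, mul_single_one_mul, map_sum, map_smul, Matrix.sum_apply,
    Matrix.smul_apply, smul_eq_mul]
  simp only [mul_assoc, mul_apply, kroneckerMap_apply, transpose_apply, one_apply, mul_ite,
    mul_one, mul_zero, of_apply, ite_mul, zero_mul, Fintype.sum_prod_type, Finset.sum_ite_eq,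
    Finset.mem_univ, ↓reduceIte, mul_comm, Finset.mul_sum, mul_left_comm, Finset.sum_ite_irrel,
    Finset.sum_const_zero, Finset.sum_ite_eq']
  exact Finset.sum_comm

end Choi

/-- Let `Θ` be a CP map with adjoint `Θadj`, prior `R = Θadj 1`
positive definite, and let `S` be positive definite. With `G = R⁻¹ # S` and
`Ξ = Θ ∘ K_{G²}`, i.e. `Ξ(X) = Θ(G X G)`, the prior of `Ξ` is `S`
(`Ξ†(I) = G R G = S`), and `𝔠(Ξ)` is the unique Bures projection of `𝔠(Θ)` onto
`{M PSD : Tr_𝒴 M = Sᵀ}`. -/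
theorem projection_to_prior_S
    {X Y : Type*} [Fintype X] [DecidableEq X] [Fintype Y] [DecidableEq Y]
    (Θ : Matrix X X ℂ →ₗ[ℂ] Matrix Y Y ℂ)
    (hCP : (choi fun M => Θ M).PosSemidef)
    (Θadj : Matrix Y Y ℂ → Matrix X X ℂ)
    (hadj : ∀ (A : Matrix X X ℂ) (B : Matrix Y Y ℂ),
      (Bᴴ * Θ A).trace = ((Θadj B)ᴴ * A).trace)
    (hR : (Θadj 1).PosDef)
    (S : Matrix X X ℂ) (hS : S.PosDef)
    (G : Matrix X X ℂ) (hG : G = geomMean (Θadj 1)⁻¹ S)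
    (Ξ : Matrix X X ℂ → Matrix Y Y ℂ)
    (hΞ : ∀ M, Ξ M = Θ (G * M * G)) :
    G * Θadj 1 * G = S ∧
    (choi Ξ).PosSemidef ∧ ptraceY (choi Ξ) = Sᵀ ∧
    (∀ N : Matrix (X × Y) (X × Y) ℂ, N.PosSemidef → ptraceY N = Sᵀ →
      fidelity (choi fun M => Θ M) N ≤ fidelity (choi fun M => Θ M) (choi Ξ) ∧
      (fidelity (choi fun M => Θ M) N = fidelity (choi fun M => Θ M) (choi Ξ) →
        N = choi Ξ)) := by
  have hGpd : G.PosDef := hG ▸ posDef_geomMean hR.inv hS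
  have hRG : G * Θadj 1 * G = S := by
    have h := geomMean_mul_inv_mul_geomMean hR.inv hS.posSemidef
    rwa [← hG, Matrix.nonsing_inv_nonsing_inv _ ((isUnit_iff_isUnit_det _).1 hR.isUnit)] at h
  set W := Gᵀ ⊗ₖ (1 : Matrix Y Y ℂ)
  have hW : W.PosDef := hGpd.transpose.kronecker PosDef.one
  have hchoi : choi Ξ = W * choi (fun M => Θ M) * W := by
    rw [show Ξ = fun M => Θ (G * M * G) from funext hΞ, choi_comp_mul_mul]
  have htrace (A : Matrix X X ℂ) : (Θ A).trace = (Θadj 1 * A).trace := by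
    simpa [hR.isHermitian.eq] using hadj A 1
  have htraceΞ (A : Matrix X X ℂ) : (Ξ A).trace = (S * A).trace := by
    rw [hΞ, htrace, ← hRG, trace_mul_comm, Matrix.mul_assoc, trace_mul_comm]
    simp only [Matrix.mul_assoc]
  have hPW : (choi (fun M => Θ M) * W).trace = (G * Θadj 1).trace := by
    rw [trace_mul_kronecker_one, ptraceY_choi htrace, ← transpose_mul, trace_transpose]
  have hNW (N : Matrix (X × Y) (X × Y) ℂ) (hN : ptraceY N = Sᵀ) :
      (N * W⁻¹).trace = (G * Θadj 1).trace := by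
    have hGS : G⁻¹ * S = Θadj 1 * G := by
      rw [← hRG, Matrix.mul_assoc, Matrix.nonsing_inv_mul_cancel_left _ _
        ((isUnit_iff_isUnit_det _).1 hGpd.isUnit)]
    rw [inv_kronecker, inv_one, trace_mul_kronecker_one, hN, ← transpose_nonsing_inv,
      ← transpose_mul, trace_transpose, hGS, trace_mul_comm]
  refine ⟨hRG, ?_, ptraceY_choi htraceΞ, fun N hN hNS => ?_⟩
  · simpa only [hchoi, hW.isHermitian.eq] using hCP.conjTranspose_mul_mul_same W
  · rw [hchoi]
    exact fidelity_le_fidelity_mul_mul_self hCP hN hW (by rw [hPW, hNW N hNS])
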